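/- Let μ ∈ ℝ and σ > 0, and let F_{μ,σ} denote the log-normal cumulative distribution function, F_{μ,σ}(x) = Φ((log x − μ)/σ) for x > 0 and F_{μ,σ}(x) = 0 for x ≤ 0, where Φ is the standard normal CDF. Define I(α, β) = ∫_{α}^{∞} φ(u) Φ(u + β) du, where φ is the standard normal density. Then for every threshold τ > 0 and observation y > 0, writing v = max(y, τ): twCRPS_τ(F_{μ,σ}, y) = −τ F_{μ,σ}(τ)² + v (2 F_{μ,σ}(v) − 1) + 2 e^{μ + σ²/2} (1 − F_{μ+σ²,σ}(v) − I((log τ − μ)/σ − σ, σ)). -/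

import Mathlib

open MeasureTheory Set

/-- Threshold-weighted CRPS: `twCRPS_τ(F, y) = ∫_τ^∞ (F(z) − 𝟙{z ≥ y})² dz`. -/
noncomputable def twCRPS (F : ℝ → ℝ) (τ y : ℝ) : ℝ :=
  ∫ z in Set.Ioi τ, (F z - if y ≤ z then (1 : ℝ) else 0) ^ 2

/-- Standard normal density `φ(x) = (1/√(2π)) e^{−x²/2}`. -/
noncomputable def stdNormalPDF (x : ℝ) : ℝ :=
  (Real.sqrt (2 * Real.pi))⁻¹ * Real.exp (-x ^ 2 / 2)

/-- Standard normal CDF `Φ(x) = ∫_{-∞}^x φ(u) du`. -/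
noncomputable def stdNormalCDF (x : ℝ) : ℝ :=
  ∫ u in Set.Iic x, stdNormalPDF u

/-- Log-normal CDF with log-location `μ` and log-scale `σ`. -/
noncomputable def logNormalCDF (μ σ : ℝ) (x : ℝ) : ℝ :=
  if 0 < x then stdNormalCDF ((Real.log x - μ) / σ) else 0

/-- The integral function `I(α, β) = ∫_α^∞ φ(u) Φ(u + β) du`. -/
noncomputable def intI (α β : ℝ) : ℝ :=
  ∫ u in Set.Ioi α, stdNormalPDF u * stdNormalCDF (u + β)

/-!
Pointwise `(F(z) - 𝟙{z ≥ y})² = (1 - F(z))² + 𝟙{z < y} (2 F(z) - 1)`, so the score is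
`∫_τ^∞ (1 - F)² + ∫_τ^v (2 F - 1)`. Both integrands have closed-form antiderivatives on `(0, ∞)`
thanks to the size-bias identity `x f_{μ,σ}(x) = e^{μ+σ²/2} f_{μ+σ²,σ}(x)` for the log-normal
density: it makes `e^{μ+σ²/2} F_{μ+σ²,σ}` a primitive of `x f_{μ,σ}(x)` and
`e^{μ+σ²/2} I((log x - μ)/σ - σ, σ)` a primitive of `-x f_{μ,σ}(x) F_{μ,σ}(x)`. The antiderivative
of `-(1 - F)²` vanishes at infinity because of the Markov-type bound
`x (1 - F_{μ,σ}(x)) ≤ e^{μ+σ²/2} (1 - F_{μ+σ²,σ}(x))`.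
-/

open Filter Topology

section Improper

variable {f : ℝ → ℝ}

theorem hasDerivAt_integral_Iic (hf : Integrable f) {x : ℝ} (hx : ContinuousAt f x) :
    HasDerivAt (fun b => ∫ u in Iic b, f u) (f x) x := by
  have hsplit :
      (fun b => ∫ u in Iic b, f u) = fun b => (∫ u in Iic 0, f u) + ∫ u in 0..b, f u := by
    funext b
    rw [← intervalIntegral.integral_Iic_sub_Iic hf.integrableOn hf.integrableOn]
    ring
  rw [hsplit]
  exact (intervalIntegral.integral_hasDerivAt_right hf.intervalIntegrable
    hf.aestronglyMeasurable.stronglyMeasurableAtFilter hx).const_add _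

theorem hasDerivAt_integral_Ioi (hf : Integrable f) {x : ℝ} (hx : ContinuousAt f x) :
    HasDerivAt (fun a => ∫ u in Ioi a, f u) (-f x) x := by
  have hsplit : (fun a => ∫ u in Ioi a, f u) = fun a => (∫ u, f u) - ∫ u in Iic a, f u := by
    funext a
    rw [← intervalIntegral.integral_Iic_add_Ioi hf.integrableOn hf.integrableOn]
    ring
  rw [hsplit]
  exact (hasDerivAt_integral_Iic hf hx).const_sub _

end Improper

theorem stdNormalPDF_eq_gaussianPDFReal :
    stdNormalPDF = ProbabilityTheory.gaussianPDFReal 0 1 := by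
  ext x
  simp [stdNormalPDF, ProbabilityTheory.gaussianPDFReal]

theorem stdNormalPDF_nonneg (x : ℝ) : 0 ≤ stdNormalPDF x := by
  unfold stdNormalPDF
  positivity

@[fun_prop]
theorem continuous_stdNormalPDF : Continuous stdNormalPDF := by
  unfold stdNormalPDF
  fun_prop

theorem integrable_stdNormalPDF : Integrable stdNormalPDF := by
  rw [stdNormalPDF_eq_gaussianPDFReal]
  exact ProbabilityTheory.integrable_gaussianPDFReal 0 1

theorem integral_stdNormalPDF : ∫ x, stdNormalPDF x = 1 := by
  rw [stdNormalPDF_eq_gaussianPDFReal]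
  exact ProbabilityTheory.integral_gaussianPDFReal_eq_one 0 one_ne_zero

theorem stdNormalPDF_mul_exp (c x : ℝ) :
    stdNormalPDF x * Real.exp (c * x) = Real.exp (c ^ 2 / 2) * stdNormalPDF (x - c) := by
  unfold stdNormalPDF
  rw [mul_assoc, ← Real.exp_add, mul_left_comm, ← Real.exp_add]
  ring_nf

theorem stdNormalCDF_nonneg (x : ℝ) : 0 ≤ stdNormalCDF x :=
  setIntegral_nonneg measurableSet_Iic fun u _ => stdNormalPDF_nonneg u

theorem stdNormalCDF_le_one (x : ℝ) : stdNormalCDF x ≤ 1 :=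
  integral_stdNormalPDF ▸
    setIntegral_le_integral integrable_stdNormalPDF (Eventually.of_forall stdNormalPDF_nonneg)

theorem integral_Ioi_stdNormalPDF (x : ℝ) :
    ∫ u in Ioi x, stdNormalPDF u = 1 - stdNormalCDF x := by
  rw [← integral_stdNormalPDF, ← intervalIntegral.integral_Iic_add_Ioi
    integrable_stdNormalPDF.integrableOn integrable_stdNormalPDF.integrableOn, stdNormalCDF]
  ring

theorem hasDerivAt_stdNormalCDF (x : ℝ) : HasDerivAt stdNormalCDF (stdNormalPDF x) x :=
  hasDerivAt_integral_Iic integrable_stdNormalPDF continuous_stdNormalPDF.continuousAt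

@[fun_prop]
theorem continuous_stdNormalCDF : Continuous stdNormalCDF :=
  continuous_iff_continuousAt.2 fun x => (hasDerivAt_stdNormalCDF x).continuousAt

theorem tendsto_one_sub_stdNormalCDF_atTop :
    Tendsto (fun x => 1 - stdNormalCDF x) atTop (𝓝 0) := by
  simp_rw [← integral_Ioi_stdNormalPDF]
  exact tendsto_integral_Ioi_zero tendsto_id

theorem setIntegral_Ioi_comp_sub_right (g : ℝ → ℝ) (a c : ℝ) :
    ∫ u in Ioi a, g (u - c) = ∫ u in Ioi (a - c), g u := by
  simpa using (measurePreserving_sub_right volume c).setIntegral_preimage_emb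
    (measurableEmbedding_subRight c) g (Ioi (a - c))

theorem exp_mul_mul_one_sub_stdNormalCDF_le {c : ℝ} (hc : 0 ≤ c) (x : ℝ) :
    Real.exp (c * x) * (1 - stdNormalCDF x) ≤
      Real.exp (c ^ 2 / 2) * (1 - stdNormalCDF (x - c)) := by
  have htilt : Integrable fun u => stdNormalPDF u * Real.exp (c * u) := by
    simp_rw [stdNormalPDF_mul_exp]
    exact (integrable_stdNormalPDF.comp_sub_right c).const_mul _
  calc Real.exp (c * x) * (1 - stdNormalCDF x)
      = ∫ u in Ioi x, stdNormalPDF u * Real.exp (c * x) := by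
        rw [integral_mul_const, integral_Ioi_stdNormalPDF, mul_comm]
    _ ≤ ∫ u in Ioi x, stdNormalPDF u * Real.exp (c * u) := by
        refine setIntegral_mono_on (integrable_stdNormalPDF.mul_const _).integrableOn
          htilt.integrableOn measurableSet_Ioi fun u hu => ?_
        gcongr
        · exact stdNormalPDF_nonneg u
        · exact hu.le
    _ = Real.exp (c ^ 2 / 2) * (1 - stdNormalCDF (x - c)) := by
        simp_rw [stdNormalPDF_mul_exp]
        rw [integral_const_mul, setIntegral_Ioi_comp_sub_right stdNormalPDF,
          integral_Ioi_stdNormalPDF]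

theorem integrable_stdNormalPDF_mul_stdNormalCDF (β : ℝ) :
    Integrable fun u => stdNormalPDF u * stdNormalCDF (u + β) := by
  refine integrable_stdNormalPDF.mono' (by fun_prop : Continuous _).aestronglyMeasurable
    (Eventually.of_forall fun u => ?_)
  rw [norm_mul, Real.norm_of_nonneg (stdNormalPDF_nonneg u),
    Real.norm_of_nonneg (stdNormalCDF_nonneg _)]
  exact mul_le_of_le_one_right (stdNormalPDF_nonneg u) (stdNormalCDF_le_one _)

theorem intI_nonneg (α β : ℝ) : 0 ≤ intI α β :=
  setIntegral_nonneg measurableSet_Ioi fun u _ =>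
    mul_nonneg (stdNormalPDF_nonneg u) (stdNormalCDF_nonneg _)

theorem intI_le_one_sub_stdNormalCDF (α β : ℝ) : intI α β ≤ 1 - stdNormalCDF α := by
  rw [← integral_Ioi_stdNormalPDF]
  refine setIntegral_mono_on (integrable_stdNormalPDF_mul_stdNormalCDF β).integrableOn
    integrable_stdNormalPDF.integrableOn measurableSet_Ioi fun u _ => ?_
  exact mul_le_of_le_one_right (stdNormalPDF_nonneg u) (stdNormalCDF_le_one _)

theorem tendsto_intI_atTop (β : ℝ) : Tendsto (fun α => intI α β) atTop (𝓝 0) :=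
  squeeze_zero (fun α => intI_nonneg α β) (fun α => intI_le_one_sub_stdNormalCDF α β)
    tendsto_one_sub_stdNormalCDF_atTop

theorem hasDerivAt_intI (α β : ℝ) :
    HasDerivAt (fun a => intI a β) (-(stdNormalPDF α * stdNormalCDF (α + β))) α :=
  hasDerivAt_integral_Ioi (integrable_stdNormalPDF_mul_stdNormalCDF β)
    (by fun_prop : Continuous _).continuousAt

noncomputable def logNormalPDF (μ σ x : ℝ) : ℝ :=
  stdNormalPDF ((Real.log x - μ) / σ) / (σ * x)

section LogNormal

variable {μ σ x : ℝ}

theorem logNormalCDF_of_pos (hx : 0 < x) :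
    logNormalCDF μ σ x = stdNormalCDF ((Real.log x - μ) / σ) :=
  if_pos hx

theorem logNormalCDF_nonneg : 0 ≤ logNormalCDF μ σ x := by
  unfold logNormalCDF
  split_ifs
  exacts [stdNormalCDF_nonneg _, le_rfl]

theorem logNormalCDF_le_one : logNormalCDF μ σ x ≤ 1 := by
  unfold logNormalCDF
  split_ifs
  exacts [stdNormalCDF_le_one _, zero_le_one]

theorem sub_add_sq_div (hσ : σ ≠ 0) (t : ℝ) : (t - (μ + σ ^ 2)) / σ = (t - μ) / σ - σ := by
  field_simp
  ring

theorem exp_mul_exp_mul_log_sub_div (hσ : σ ≠ 0) (hx : 0 < x) :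
    Real.exp μ * Real.exp (σ * ((Real.log x - μ) / σ)) = x := by
  rw [← Real.exp_add, mul_div_cancel₀ _ hσ, add_sub_cancel, Real.exp_log hx]

theorem logNormalCDF_add_sq_of_pos (hσ : σ ≠ 0) (hx : 0 < x) :
    logNormalCDF (μ + σ ^ 2) σ x = stdNormalCDF ((Real.log x - μ) / σ - σ) := by
  rw [logNormalCDF_of_pos hx, sub_add_sq_div hσ]

theorem hasDerivAt_logNormalCDF (hx : 0 < x) :
    HasDerivAt (logNormalCDF μ σ) (logNormalPDF μ σ x) x := by
  have hinner : HasDerivAt (fun t => (Real.log t - μ) / σ) (x⁻¹ / σ) x :=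
    ((Real.hasDerivAt_log hx.ne').sub_const μ).div_const σ
  refine ((hasDerivAt_stdNormalCDF _).comp x hinner).congr_of_eventuallyEq ?_ |>.congr_deriv ?_
  · filter_upwards [Ioi_mem_nhds hx] with t ht using logNormalCDF_of_pos ht
  · rw [logNormalPDF]
    field_simp

theorem continuousOn_logNormalCDF : ContinuousOn (logNormalCDF μ σ) (Ioi 0) :=
  fun _ hx => (hasDerivAt_logNormalCDF hx).continuousAt.continuousWithinAt

theorem mul_logNormalPDF (hσ : σ ≠ 0) (hx : 0 < x) :
    x * logNormalPDF μ σ x = Real.exp (μ + σ ^ 2 / 2) * logNormalPDF (μ + σ ^ 2) σ x := by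
  rw [logNormalPDF, logNormalPDF, Real.exp_add, sub_add_sq_div hσ]
  have hx_eq := exp_mul_exp_mul_log_sub_div (μ := μ) hσ hx
  set a := (Real.log x - μ) / σ
  field_simp
  linear_combination -stdNormalPDF a * hx_eq + Real.exp μ * stdNormalPDF_mul_exp σ a

theorem hasDerivAt_exp_mul_logNormalCDF_add_sq (hσ : σ ≠ 0) (hx : 0 < x) :
    HasDerivAt (fun t => Real.exp (μ + σ ^ 2 / 2) * logNormalCDF (μ + σ ^ 2) σ t)
      (x * logNormalPDF μ σ x) x := by
  rw [mul_logNormalPDF hσ hx]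
  exact (hasDerivAt_logNormalCDF hx).const_mul _

theorem hasDerivAt_exp_mul_intI (hσ : σ ≠ 0) (hx : 0 < x) :
    HasDerivAt (fun t => Real.exp (μ + σ ^ 2 / 2) * intI ((Real.log t - μ) / σ - σ) σ)
      (-(x * logNormalPDF μ σ x * logNormalCDF μ σ x)) x := by
  have hinner : HasDerivAt (fun t => (Real.log t - μ) / σ - σ) (x⁻¹ / σ) x :=
    (((Real.hasDerivAt_log hx.ne').sub_const μ).div_const σ).sub_const σ
  refine (((hasDerivAt_intI _ σ).comp x hinner).const_mul _).congr_deriv ?_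
  rw [mul_logNormalPDF hσ hx, logNormalCDF_of_pos hx, sub_add_cancel, logNormalPDF,
    sub_add_sq_div hσ]
  field_simp

theorem mul_one_sub_logNormalCDF_le (hσ : 0 < σ) (hx : 0 < x) :
    x * (1 - logNormalCDF μ σ x) ≤
      Real.exp (μ + σ ^ 2 / 2) * (1 - logNormalCDF (μ + σ ^ 2) σ x) := by
  rw [logNormalCDF_add_sq_of_pos hσ.ne' hx, logNormalCDF_of_pos hx, Real.exp_add]
  nth_rewrite 1 [← exp_mul_exp_mul_log_sub_div hσ.ne' hx]
  rw [mul_assoc, mul_assoc]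
  exact mul_le_mul_of_nonneg_left (exp_mul_mul_one_sub_stdNormalCDF_le hσ.le _) (by positivity)

theorem tendsto_log_sub_div_atTop (hσ : 0 < σ) :
    Tendsto (fun x => (Real.log x - μ) / σ) atTop atTop :=
  (tendsto_atTop_add_const_right _ (-μ) Real.tendsto_log_atTop).atTop_div_const hσ

theorem tendsto_one_sub_logNormalCDF_atTop (hσ : 0 < σ) :
    Tendsto (fun x => 1 - logNormalCDF μ σ x) atTop (𝓝 0) := by
  refine (tendsto_one_sub_stdNormalCDF_atTop.comp (tendsto_log_sub_div_atTop (μ := μ) hσ)).congr' ?_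
  filter_upwards [eventually_gt_atTop 0] with x hx
  simp [logNormalCDF_of_pos hx]

theorem hasDerivAt_logNormal_sq_antideriv (hσ : σ ≠ 0) (hx : 0 < x) :
    HasDerivAt (fun t => -t * (1 - logNormalCDF μ σ t) ^ 2 + 2 * Real.exp (μ + σ ^ 2 / 2) *
        (1 - logNormalCDF (μ + σ ^ 2) σ t - intI ((Real.log t - μ) / σ - σ) σ))
      (-(1 - logNormalCDF μ σ x) ^ 2) x := by
  have h := ((hasDerivAt_id' x).neg.mul
    (((hasDerivAt_logNormalCDF (μ := μ) (σ := σ) hx).const_sub 1).pow 2)).add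
    ((((hasDerivAt_const x (Real.exp (μ + σ ^ 2 / 2))).sub
      (hasDerivAt_exp_mul_logNormalCDF_add_sq (μ := μ) hσ hx)).sub
        (hasDerivAt_exp_mul_intI (μ := μ) hσ hx)).const_mul 2)
  refine (h.congr_deriv ?_).congr_of_eventuallyEq (Eventually.of_forall fun t => ?_) <;>
  · simp only [Pi.add_apply, Pi.mul_apply, Pi.sub_apply, Pi.pow_apply, Pi.neg_apply]
    ring

theorem hasDerivAt_logNormal_lin_antideriv (hσ : σ ≠ 0) (hx : 0 < x) :
    HasDerivAt (fun t => t * (2 * logNormalCDF μ σ t - 1) -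
        2 * (Real.exp (μ + σ ^ 2 / 2) * logNormalCDF (μ + σ ^ 2) σ t))
      (2 * logNormalCDF μ σ x - 1) x := by
  have h := ((hasDerivAt_id' x).mul
    (((hasDerivAt_logNormalCDF (μ := μ) (σ := σ) hx).const_mul 2).sub_const 1)).sub
    ((hasDerivAt_exp_mul_logNormalCDF_add_sq (μ := μ) hσ hx).const_mul 2)
  refine h.congr_deriv ?_
  ring

theorem tendsto_logNormal_sq_antideriv_atTop (hσ : 0 < σ) :
    Tendsto (fun t => -t * (1 - logNormalCDF μ σ t) ^ 2 + 2 * Real.exp (μ + σ ^ 2 / 2) *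
        (1 - logNormalCDF (μ + σ ^ 2) σ t - intI ((Real.log t - μ) / σ - σ) σ)) atTop (𝓝 0) := by
  have hF₂ := tendsto_one_sub_logNormalCDF_atTop (μ := μ + σ ^ 2) hσ
  have hI : Tendsto (fun t => intI ((Real.log t - μ) / σ - σ) σ) atTop (𝓝 0) := by
    simp_rw [← sub_add_sq_div hσ.ne']
    exact (tendsto_intI_atTop σ).comp (tendsto_log_sub_div_atTop hσ)
  have hsq : Tendsto (fun t => t * (1 - logNormalCDF μ σ t) ^ 2) atTop (𝓝 0) := by
    refine squeeze_zero' ?_ ?_ (by simpa using hF₂.const_mul (Real.exp (μ + σ ^ 2 / 2)))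
    · filter_upwards [eventually_ge_atTop 0] with t ht
      positivity
    · filter_upwards [eventually_gt_atTop 0] with t ht
      have h₀ : 0 ≤ 1 - logNormalCDF μ σ t := sub_nonneg.2 logNormalCDF_le_one
      have h₁ : 1 - logNormalCDF μ σ t ≤ 1 := sub_le_self _ logNormalCDF_nonneg
      calc t * (1 - logNormalCDF μ σ t) ^ 2 ≤ t * (1 - logNormalCDF μ σ t) := by
            rw [sq, ← mul_assoc]
            exact mul_le_of_le_one_right (by positivity) h₁
        _ ≤ _ := mul_one_sub_logNormalCDF_le hσ ht
  simpa using hsq.neg.add ((hF₂.sub hI).const_mul (2 * Real.exp (μ + σ ^ 2 / 2)))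

theorem integrableOn_one_sub_logNormalCDF_sq (hσ : 0 < σ) {a : ℝ} (ha : 0 < a) :
    IntegrableOn (fun z => (1 - logNormalCDF μ σ z) ^ 2) (Ioi a) := by
  have h := integrableOn_Ioi_deriv_of_nonpos'
    (fun x hx => hasDerivAt_logNormal_sq_antideriv hσ.ne' (ha.trans_le hx))
    (fun x _ => neg_nonpos.2 (sq_nonneg _)) (tendsto_logNormal_sq_antideriv_atTop (μ := μ) hσ)
  simpa using h.neg

theorem integral_Ioi_one_sub_logNormalCDF_sq (hσ : 0 < σ) {a : ℝ} (ha : 0 < a) :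
    ∫ z in Ioi a, (1 - logNormalCDF μ σ z) ^ 2 =
      -a * (1 - logNormalCDF μ σ a) ^ 2 + 2 * Real.exp (μ + σ ^ 2 / 2) *
        (1 - logNormalCDF (μ + σ ^ 2) σ a - intI ((Real.log a - μ) / σ - σ) σ) := by
  have h := integral_Ioi_of_hasDerivAt_of_nonpos'
    (fun x hx => hasDerivAt_logNormal_sq_antideriv hσ.ne' (ha.trans_le hx))
    (fun x _ => neg_nonpos.2 (sq_nonneg _)) (tendsto_logNormal_sq_antideriv_atTop (μ := μ) hσ)
  rw [integral_neg] at h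
  linarith

theorem intervalIntegrable_logNormalCDF {a b : ℝ} (ha : 0 < a) (hb : 0 < b) :
    IntervalIntegrable (logNormalCDF μ σ) volume a b :=
  (continuousOn_logNormalCDF.mono fun _ hx => (lt_min ha hb).trans_le hx.1).intervalIntegrable

theorem integral_two_mul_logNormalCDF_sub_one (hσ : σ ≠ 0) {a b : ℝ} (ha : 0 < a) (hb : 0 < b) :
    ∫ z in a..b, (2 * logNormalCDF μ σ z - 1) =
      (b * (2 * logNormalCDF μ σ b - 1) -
          2 * (Real.exp (μ + σ ^ 2 / 2) * logNormalCDF (μ + σ ^ 2) σ b)) -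
        (a * (2 * logNormalCDF μ σ a - 1) -
          2 * (Real.exp (μ + σ ^ 2 / 2) * logNormalCDF (μ + σ ^ 2) σ a)) :=
  intervalIntegral.integral_eq_sub_of_hasDerivAt
    (fun _ hx => hasDerivAt_logNormal_lin_antideriv hσ ((lt_min ha hb).trans_le hx.1))
    (((intervalIntegrable_logNormalCDF ha hb).const_mul 2).sub intervalIntegrable_const)

end LogNormal

theorem twCRPS_eq_integral_add_intervalIntegral {F : ℝ → ℝ} {τ y : ℝ}
    (hsq : IntegrableOn (fun z => (1 - F z) ^ 2) (Ioi τ))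
    (hlin : IntervalIntegrable (fun z => 2 * F z - 1) volume τ (max y τ)) :
    twCRPS F τ y = (∫ z in Ioi τ, (1 - F z) ^ 2) + ∫ z in τ..max y τ, (2 * F z - 1) := by
  have hset : Iio y ∩ Ioi τ = Ioo τ (max y τ) := by
    ext z
    simp only [mem_inter_iff, mem_Iio, mem_Ioi, mem_Ioo, lt_max_iff]
    constructor
    · rintro ⟨hzy, hτz⟩
      exact ⟨hτz, Or.inl hzy⟩
    · rintro ⟨hτz, hzy | hzτ⟩
      exacts [⟨hzy, hτz⟩, absurd hzτ (not_lt.2 hτz.le)]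
  have hpt : ∀ z, (F z - if y ≤ z then (1 : ℝ) else 0) ^ 2 =
      (1 - F z) ^ 2 + (Iio y).indicator (fun z => 2 * F z - 1) z := by
    intro z
    by_cases hz : y ≤ z
    · rw [if_pos hz, indicator_of_notMem (notMem_Iio.2 hz)]
      ring
    · rw [if_neg hz, indicator_of_mem (mem_Iio.2 (not_le.1 hz))]
      ring
  have hind : IntegrableOn ((Iio y).indicator fun z => 2 * F z - 1) (Ioi τ) := by
    refine (integrable_indicator_iff measurableSet_Iio).2 ?_
    rw [IntegrableOn, Measure.restrict_restrict measurableSet_Iio, hset]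
    exact ((intervalIntegrable_iff_integrableOn_Ioc_of_le (le_max_right y τ)).1 hlin).mono_set
      Ioo_subset_Ioc_self
  rw [twCRPS]
  simp_rw [hpt]
  rw [integral_add hsq hind, setIntegral_indicator measurableSet_Iio, inter_comm, hset,
    ← integral_Ioc_eq_integral_Ioo, intervalIntegral.integral_of_le (le_max_right y τ)]

theorem twCRPS_logNormal_general (μ σ : ℝ) (hσ : 0 < σ)
    (τ y : ℝ) (hτ : 0 < τ) :
    twCRPS (logNormalCDF μ σ) τ y =
      -τ * (logNormalCDF μ σ τ) ^ 2
        + max y τ * (2 * logNormalCDF μ σ (max y τ) - 1)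
        + 2 * Real.exp (μ + σ ^ 2 / 2) *
          (1 - logNormalCDF (μ + σ ^ 2) σ (max y τ)
            - intI ((Real.log τ - μ) / σ - σ) σ) := by
  have hv : 0 < max y τ := hτ.trans_le (le_max_right y τ)
  rw [twCRPS_eq_integral_add_intervalIntegral (integrableOn_one_sub_logNormalCDF_sq hσ hτ)
      (((intervalIntegrable_logNormalCDF hτ hv).const_mul 2).sub intervalIntegrable_const),
    integral_Ioi_one_sub_logNormalCDF_sq hσ hτ,
    integral_two_mul_logNormalCDF_sub_one hσ.ne' hτ hv]
  ring

theorem twCRPS_logNormal (μ σ : ℝ) (hσ : 0 < σ)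
    (τ y : ℝ) (hτ : 0 < τ) (hy : 0 < y) :
    twCRPS (logNormalCDF μ σ) τ y =
      -τ * (logNormalCDF μ σ τ) ^ 2
        + max y τ * (2 * logNormalCDF μ σ (max y τ) - 1)
        + 2 * Real.exp (μ + σ ^ 2 / 2) *
          (1 - logNormalCDF (μ + σ ^ 2) σ (max y τ)
            - intI ((Real.log τ - μ) / σ - σ) σ) :=
  twCRPS_logNormal_general μ σ hσ τ y hτ
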